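/- arXiv:2412.20526 — 8 statements merged into one kernel-verified Lean document; each statement's English description precedes it below -/
import Mathlib

section
/- Let (X,d) and (Y,ρ) be semimetric spaces, and let Φ : ℝ≥0 × ℝ≥0 → ℝ≥0 be symmetric, monotone increasing in both arguments, with Φ(0,0)=0, a ≤ Φ(0,a) for all a > 0, and kΦ(u,v) = Φ(ku,kv) for all k > 0. Suppose Φ is a multiplicative quadruple function for (X,d), i.e., d(x,z)d(t,y) ≤ Φ(d(x,y)d(t,z), d(x,t)d(y,z)) for all x,y,z,t ∈ X. Let f : X → Y be a bijective η-quasisymmetric mapping. If for all t₁,t₂,t₃,t₄ > 0, t₁t₂t₃t₄ ≤ Φ(t₁t₂, t₃t₄) implies η(t₁)η(t₂)η(t₃)η(t₄) ≤ Φ(η(t₁)η(t₂), η(t₃)η(t₄)), then Φ is a multiplicative quadruple function for (Y,ρ). -/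
/-!
Pull the four points of `Y` back along `f` to `a, b, c, e`. If two of them coincide, the
quadruple inequality in `Y` holds because `a ≤ Φ(0, a)`. Otherwise quasisymmetry bounds each distance in `Y` by a distance ratio in `X`
transported through `η`: with `s₁ = d(a,c)/d(a,b)`, `s₂ = d(e,b)/d(e,c)`, `s₃ = d(a,c)/d(a,e)`,
`s₄ = d(b,e)/d(b,c)` one gets `ρ(ac)ρ(eb) ≤ η(s₁)η(s₂) ρ(ab)ρ(ec)` and `≤ η(s₃)η(s₄) ρ(ae)ρ(bc)`.
By homogeneity of `Φ` the quadruple inequality in `X` is equivalent to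
`s₁s₂s₃s₄ ≤ Φ(s₁s₂, s₃s₄)`, the hypothesis on `η` transports it to the `η(sᵢ)`, and homogeneity
converts it back into the quadruple inequality in `Y`.
-/

open NNReal

section

variable {X Y : Type*} {Φ : ℝ≥0 → ℝ≥0 → ℝ≥0}

def MulQuadrupleIneq (ρ : Y → Y → ℝ≥0) (Φ : ℝ≥0 → ℝ≥0 → ℝ≥0) (x y z t : Y) : Prop :=
  ρ x z * ρ t y ≤ Φ (ρ x y * ρ t z) (ρ x t * ρ y z)

lemma mulQuadrupleIneq_of_eq {ρ : Y → Y → ℝ≥0}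
    (hρ0 : ∀ x y, ρ x y = 0 ↔ x = y) (hρs : ∀ x y, ρ x y = ρ y x)
    (hΦsymm : ∀ u v, Φ u v = Φ v u) (ha : ∀ a : ℝ≥0, 0 < a → a ≤ Φ 0 a) {x y z t : Y}
    (h : x = z ∨ t = y ∨ x = y ∨ t = z ∨ x = t ∨ y = z) : MulQuadrupleIneq ρ Φ x y z t := by
  have hρxx : ∀ x, ρ x x = 0 := fun x => (hρ0 x x).2 rfl
  have hΦ : ∀ a, a ≤ Φ 0 a := fun a =>
    (eq_zero_or_pos a).elim (fun h => h.symm ▸ zero_le) (ha a)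
  unfold MulQuadrupleIneq
  rcases h with rfl | rfl | rfl | rfl | rfl | rfl
  · simp [hρxx]
  · simp [hρxx]
  · simpa [hρxx, hρs t x, mul_comm] using hΦ (ρ x t * ρ x z)
  · simpa [hρxx, hρs t y] using hΦ (ρ x t * ρ y t)
  · simpa [hρxx, hρs, mul_comm, hΦsymm _ 0] using hΦ (ρ x y * ρ x z)
  · simpa [hρxx, hρs, hΦsymm _ 0] using hΦ (ρ x y * ρ t y)

lemma div_mul_div_le_apply_div_of_le_apply
    (hΦsymm : ∀ u v, Φ u v = Φ v u) (hΦhom : ∀ k u v : ℝ≥0, 0 < k → k * Φ u v = Φ (k * u) (k * v))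
    {p u v : ℝ≥0} (hp : 0 < p) (hu : 0 < u) (hv : 0 < v) (h : p ≤ Φ u v) :
    p / u * (p / v) ≤ Φ (p / u) (p / v) := by
  have hk : 0 < p / (u * v) := by positivity
  calc p / u * (p / v) = p / (u * v) * p := by field_simp
    _ ≤ p / (u * v) * Φ v u := by rw [hΦsymm]; gcongr
    _ = Φ (p / u) (p / v) := by rw [hΦhom _ _ _ hk]; congr 1 <;> field_simp

lemma le_apply_of_mul_le_apply (hΦsymm : ∀ u v, Φ u v = Φ v u)
    (hΦmono : ∀ u₁ u₂ v₁ v₂, u₁ ≤ u₂ → v₁ ≤ v₂ → Φ u₁ v₁ ≤ Φ u₂ v₂)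
    (hΦhom : ∀ k u v : ℝ≥0, 0 < k → k * Φ u v = Φ (k * u) (k * v))
    {P α β A B : ℝ≥0} (hA : P ≤ α * A) (hB : P ≤ β * B) (hαβ : α * β ≤ Φ α β) : P ≤ Φ A B := by
  rcases eq_zero_or_pos P with rfl | hP
  · exact zero_le
  have hα : 0 < α := pos_of_mul_pos_left (hP.trans_le hA) zero_le
  have hβ : 0 < β := pos_of_mul_pos_left (hP.trans_le hB) zero_le
  have hk : 0 < P / (α * β) := by positivity
  calc P = P / (α * β) * (α * β) := by field_simp
    _ ≤ P / (α * β) * Φ β α := by rw [hΦsymm]; gcongr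
    _ = Φ (P / α) (P / β) := by rw [hΦhom _ _ _ hk]; congr 1 <;> field_simp
    _ ≤ Φ A B := hΦmono _ _ _ _ (div_le_of_le_mul₀ zero_le zero_le (by rwa [mul_comm]))
      (div_le_of_le_mul₀ zero_le zero_le (by rwa [mul_comm]))

lemma mulQuadrupleIneq_image_of_pos {d : X → X → ℝ≥0} {ρ : Y → Y → ℝ≥0}
    (hds : ∀ x y, d x y = d y x) (hρs : ∀ x y, ρ x y = ρ y x)
    (hΦsymm : ∀ u v, Φ u v = Φ v u)
    (hΦmono : ∀ u₁ u₂ v₁ v₂, u₁ ≤ u₂ → v₁ ≤ v₂ → Φ u₁ v₁ ≤ Φ u₂ v₂)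
    (hΦhom : ∀ k u v : ℝ≥0, 0 < k → k * Φ u v = Φ (k * u) (k * v))
    (hX : ∀ x y z t : X, MulQuadrupleIneq d Φ x y z t)
    {f : X → Y} {η : ℝ≥0 → ℝ≥0}
    (hqs : ∀ (a b x : X) (t : ℝ≥0), 0 < t →
      d x a ≤ t * d x b → ρ (f x) (f a) ≤ η t * ρ (f x) (f b))
    (himp : ∀ t₁ t₂ t₃ t₄ : ℝ≥0, 0 < t₁ → 0 < t₂ → 0 < t₃ → 0 < t₄ →
      t₁ * t₂ * t₃ * t₄ ≤ Φ (t₁ * t₂) (t₃ * t₄) →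
      η t₁ * η t₂ * η t₃ * η t₄ ≤ Φ (η t₁ * η t₂) (η t₃ * η t₄))
    {a b c e : X} (hac : 0 < d a c) (heb : 0 < d e b) (hab : 0 < d a b) (hec : 0 < d e c)
    (hae : 0 < d a e) (hbc : 0 < d b c) :
    MulQuadrupleIneq ρ Φ (f a) (f b) (f c) (f e) := by
  have hqs_div : ∀ {x p q}, 0 < d x p → 0 < d x q →
      ρ (f x) (f p) ≤ η (d x p / d x q) * ρ (f x) (f q) := fun hp hq =>
    hqs _ _ _ _ (div_pos hp hq) (div_mul_cancel₀ _ hq.ne').ge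
  have hbe : 0 < d b e := hds b e ▸ heb
  have h12 : d a c / d a b * (d e b / d e c) = d a c * d e b / (d a b * d e c) := by
    field_simp
  have h34 : d a c / d a e * (d b e / d b c) = d a c * d e b / (d a e * d b c) := by
    rw [hds b e]; field_simp
  have hcond := div_mul_div_le_apply_div_of_le_apply hΦsymm hΦhom (by positivity)
    (by positivity) (by positivity) (hX a b c e)
  rw [← h12, ← h34, ← mul_assoc] at hcond
  have hηcond := himp _ _ _ _ (div_pos hac hab) (div_pos heb hec) (div_pos hac hae)
    (div_pos hbe hbc) hcond
  rw [mul_assoc (η _ * η _)] at hηcond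
  refine le_apply_of_mul_le_apply hΦsymm hΦmono hΦhom ?_ ?_ hηcond
  · calc ρ (f a) (f c) * ρ (f e) (f b)
        ≤ η (d a c / d a b) * ρ (f a) (f b) * (η (d e b / d e c) * ρ (f e) (f c)) :=
          mul_le_mul' (hqs_div hac hab) (hqs_div heb hec)
      _ = _ := by ring
  · calc ρ (f a) (f c) * ρ (f e) (f b) = ρ (f a) (f c) * ρ (f b) (f e) := by rw [hρs (f e)]
      _ ≤ η (d a c / d a e) * ρ (f a) (f e) * (η (d b e / d b c) * ρ (f b) (f c)) :=
          mul_le_mul' (hqs_div hac hae) (hqs_div hbe hbc)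
      _ = _ := by ring

end

theorem quasisymmetric_preserves_mult_quadruple_general
    {X Y : Type*} (d : X → X → ℝ≥0) (ρ : Y → Y → ℝ≥0)
    (hd0 : ∀ x y, d x y = 0 ↔ x = y) (hds : ∀ x y, d x y = d y x)
    (hρ0 : ∀ x y, ρ x y = 0 ↔ x = y) (hρs : ∀ x y, ρ x y = ρ y x)
    (Φ : ℝ≥0 → ℝ≥0 → ℝ≥0)
    (hΦsymm : ∀ u v, Φ u v = Φ v u)
    (hΦmono : ∀ u₁ u₂ v₁ v₂, u₁ ≤ u₂ → v₁ ≤ v₂ → Φ u₁ v₁ ≤ Φ u₂ v₂)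
    (ha : ∀ a : ℝ≥0, 0 < a → a ≤ Φ 0 a)
    (hΦhom : ∀ k u v : ℝ≥0, 0 < k → k * Φ u v = Φ (k * u) (k * v))
    (hX : ∀ x y z t : X, d x z * d t y ≤ Φ (d x y * d t z) (d x t * d y z))
    (f : X → Y) (hf : Function.Bijective f)
    (η : ℝ≥0 → ℝ≥0)
    (hqs : ∀ (a b x : X) (t : ℝ≥0), 0 < t →
      d x a ≤ t * d x b → ρ (f x) (f a) ≤ η t * ρ (f x) (f b))
    (himp : ∀ t₁ t₂ t₃ t₄ : ℝ≥0, 0 < t₁ → 0 < t₂ → 0 < t₃ → 0 < t₄ →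
      t₁ * t₂ * t₃ * t₄ ≤ Φ (t₁ * t₂) (t₃ * t₄) →
      η t₁ * η t₂ * η t₃ * η t₄ ≤ Φ (η t₁ * η t₂) (η t₃ * η t₄)) :
    ∀ x y z t : Y, ρ x z * ρ t y ≤ Φ (ρ x y * ρ t z) (ρ x t * ρ y z) := by
  intro x y z t
  obtain ⟨a, rfl⟩ := hf.2 x
  obtain ⟨b, rfl⟩ := hf.2 y
  obtain ⟨c, rfl⟩ := hf.2 z
  obtain ⟨e, rfl⟩ := hf.2 t
  by_cases hdeg : f a = f c ∨ f e = f b ∨ f a = f b ∨ f e = f c ∨ f a = f e ∨ f b = f c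
  · exact mulQuadrupleIneq_of_eq hρ0 hρs hΦsymm ha hdeg
  obtain ⟨hac, heb, hab, hec, hae, hbc⟩ := by simpa only [not_or] using hdeg
  have hdpos : ∀ {p q}, f p ≠ f q → 0 < d p q := fun h =>
    pos_iff_ne_zero.2 fun h0 => h (congrArg f ((hd0 _ _).1 h0))
  exact mulQuadrupleIneq_image_of_pos hds hρs hΦsymm hΦmono hΦhom hX hqs himp
    (hdpos hac) (hdpos heb) (hdpos hab) (hdpos hec) (hdpos hae) (hdpos hbc)

theorem quasisymmetric_preserves_mult_quadruple
    {X Y : Type*} (d : X → X → ℝ≥0) (ρ : Y → Y → ℝ≥0)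
    (hd0 : ∀ x y, d x y = 0 ↔ x = y) (hds : ∀ x y, d x y = d y x)
    (hρ0 : ∀ x y, ρ x y = 0 ↔ x = y) (hρs : ∀ x y, ρ x y = ρ y x)
    (Φ : ℝ≥0 → ℝ≥0 → ℝ≥0)
    (hΦsymm : ∀ u v, Φ u v = Φ v u)
    (hΦmono : ∀ u₁ u₂ v₁ v₂, u₁ ≤ u₂ → v₁ ≤ v₂ → Φ u₁ v₁ ≤ Φ u₂ v₂)
    (hΦ00 : Φ 0 0 = 0)
    (ha : ∀ a : ℝ≥0, 0 < a → a ≤ Φ 0 a)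
    (hΦhom : ∀ k u v : ℝ≥0, 0 < k → k * Φ u v = Φ (k * u) (k * v))
    (hX : ∀ x y z t : X, d x z * d t y ≤ Φ (d x y * d t z) (d x t * d y z))
    (f : X → Y) (hf : Function.Bijective f)
    (η : ℝ≥0 → ℝ≥0) (hη : IsHomeomorph η)
    (hqs : ∀ (a b x : X) (t : ℝ≥0), 0 < t →
      d x a ≤ t * d x b → ρ (f x) (f a) ≤ η t * ρ (f x) (f b))
    (himp : ∀ t₁ t₂ t₃ t₄ : ℝ≥0, 0 < t₁ → 0 < t₂ → 0 < t₃ → 0 < t₄ →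
      t₁ * t₂ * t₃ * t₄ ≤ Φ (t₁ * t₂) (t₃ * t₄) →
      η t₁ * η t₂ * η t₃ * η t₄ ≤ Φ (η t₁ * η t₂) (η t₃ * η t₄)) :
    ∀ x y z t : Y, ρ x z * ρ t y ≤ Φ (ρ x y * ρ t z) (ρ x t * ρ y z) :=
  quasisymmetric_preserves_mult_quadruple_general d ρ hd0 hds hρ0 hρs Φ hΦsymm hΦmono ha hΦhom hX f
    hf η hqs himp
end

section
/- Let (X,d) be a Ptolemaic semimetric space, (Y,ρ) a semimetric space, and f : X → Y a bijective η-quasisymmetric mapping. If for all t₁,t₂,t₃,t₄ ≥ 0, t₁t₂t₃t₄ ≤ t₁t₂ + t₃t₄ implies η(t₁)η(t₂)η(t₃)η(t₄) ≤ η(t₁)η(t₂) + η(t₃)η(t₄), then (Y,ρ) is Ptolemaic. -/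
open NNReal

/-
For `A = ρ(x,z)ρ(t,y)`, quasisymmetry bounds `A` by `u·ρ(x,y)ρ(t,z)` and by `v·ρ(x,t)ρ(y,z)`, where
`u = η(t₁)η(t₂)` and `v = η(t₃)η(t₄)` for the distance ratios `t₁, …, t₄` of the preimages.
Ptolemy's inequality in `X` says exactly `t₁t₂t₃t₄ ≤ t₁t₂ + t₃t₄`, so the hypothesis on `η` gives
`uv ≤ u + v`, and the two bounds combine to `A ≤ ρ(x,y)ρ(t,z) + ρ(x,t)ρ(y,z)`.
-/

theorem div_mul_div_le_div_add_div {α : Type*} [Semifield α] [LinearOrder α]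
    [IsStrictOrderedRing α] {P Q R : α} (hP : 0 ≤ P) (hQ : 0 < Q) (hR : 0 < R)
    (h : P ≤ Q + R) : P / Q * (P / R) ≤ P / Q + P / R := by
  rw [div_mul_div_comm, div_add_div _ _ hQ.ne' hR.ne']
  exact div_le_div_of_nonneg_right ((mul_le_mul_of_nonneg_left h hP).trans_eq (by ring))
    (by positivity)

theorem NNReal.le_add_of_le_mul_of_le_mul {A B C u v : ℝ≥0} (hB : A ≤ u * B) (hC : A ≤ v * C)
    (huv : u * v ≤ u + v) : A ≤ B + C := by
  rcases eq_or_ne (u + v) 0 with h | h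
  · rw [(add_eq_zero.1 h).1, zero_mul] at hB
    exact hB.trans zero_le
  refine le_of_mul_le_mul_left ?_ (pos_iff_ne_zero.2 h)
  calc (u + v) * A = u * A + v * A := add_mul _ _ _
    _ ≤ u * (v * C) + v * (u * B) := by gcongr
    _ = u * v * (B + C) := by ring
    _ ≤ (u + v) * (B + C) := by gcongr

theorem mul_le_mul_mul_of_le_mul {A B C D s t : ℝ≥0} (hA : A ≤ s * B) (hC : C ≤ t * D) :
    A * C ≤ s * t * (B * D) :=
  (mul_le_mul' hA hC).trans_eq (mul_mul_mul_comm s B t D)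

theorem ptolemy_of_two_eq {Y : Type*} {ρ : Y → Y → ℝ≥0} (hρ0 : ∀ x, ρ x x = 0)
    (hρs : ∀ x y, ρ x y = ρ y x) {x y z t : Y}
    (h : x = z ∨ t = y ∨ x = y ∨ t = z ∨ x = t ∨ y = z) :
    ρ x z * ρ t y ≤ ρ x y * ρ t z + ρ x t * ρ y z := by
  rcases h with rfl | rfl | rfl | rfl | rfl | rfl <;> simp [hρ0, hρs, mul_comm]

theorem le_mul_of_quasisymmetric {X Y : Type*} {d : X → X → ℝ≥0} {ρ : Y → Y → ℝ≥0} {f : X → Y}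
    {η : ℝ≥0 → ℝ≥0}
    (hqs : ∀ (a b x : X) (t : ℝ≥0), 0 < t →
      d x a ≤ t * d x b → ρ (f x) (f a) ≤ η t * ρ (f x) (f b))
    {x a b : X} (ha : 0 < d x a) (hb : 0 < d x b) :
    ρ (f x) (f a) ≤ η (d x a / d x b) * ρ (f x) (f b) :=
  hqs a b x _ (div_pos ha hb) (div_mul_cancel₀ _ hb.ne').ge

theorem quasisymmetric_preserves_ptolemaic_general
    {X Y : Type*} (d : X → X → ℝ≥0) (ρ : Y → Y → ℝ≥0)
    (hd0 : ∀ x y, d x y = 0 ↔ x = y) (hds : ∀ x y, d x y = d y x)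
    (hρ0 : ∀ x y, ρ x y = 0 ↔ x = y) (hρs : ∀ x y, ρ x y = ρ y x)
    (hX : ∀ x y z t : X, d x z * d t y ≤ d x y * d t z + d x t * d y z)
    (f : X → Y) (hf : Function.Bijective f)
    (η : ℝ≥0 → ℝ≥0)
    (hqs : ∀ (a b x : X) (t : ℝ≥0), 0 < t →
      d x a ≤ t * d x b → ρ (f x) (f a) ≤ η t * ρ (f x) (f b))
    (himp : ∀ t₁ t₂ t₃ t₄ : ℝ≥0,
      t₁ * t₂ * t₃ * t₄ ≤ t₁ * t₂ + t₃ * t₄ →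
      η t₁ * η t₂ * η t₃ * η t₄ ≤ η t₁ * η t₂ + η t₃ * η t₄) :
    ∀ x y z t : Y, ρ x z * ρ t y ≤ ρ x y * ρ t z + ρ x t * ρ y z := by
  intro x y z t
  obtain ⟨a, rfl⟩ := hf.2 x
  obtain ⟨b, rfl⟩ := hf.2 y
  obtain ⟨c, rfl⟩ := hf.2 z
  obtain ⟨e, rfl⟩ := hf.2 t
  by_cases hdeg : f a = f c ∨ f e = f b ∨ f a = f b ∨ f e = f c ∨ f a = f e ∨ f b = f c
  · exact ptolemy_of_two_eq (fun x => (hρ0 x x).2 rfl) hρs hdeg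
  push Not at hdeg
  obtain ⟨hac, heb, hab, hec, hae, hbc⟩ := hdeg
  have hpos : ∀ {u v : X}, f u ≠ f v → 0 < d u v := fun h =>
    pos_iff_ne_zero.2 fun h0 => h (congrArg f ((hd0 _ _).1 h0))
  have hratio : d a c / d a b * (d e b / d e c) * (d a c / d a e * (d b e / d b c)) ≤
      d a c / d a b * (d e b / d e c) + d a c / d a e * (d b e / d b c) := by
    rw [div_mul_div_comm (d a c), div_mul_div_comm (d a c), hds b e]
    exact div_mul_div_le_div_add_div zero_le (mul_pos (hpos hab) (hpos hec))
      (mul_pos (hpos hae) (hpos hbc)) (hX a b c e)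
  refine NNReal.le_add_of_le_mul_of_le_mul
    (mul_le_mul_mul_of_le_mul (le_mul_of_quasisymmetric hqs (hpos hac) (hpos hab))
      (le_mul_of_quasisymmetric hqs (hpos heb) (hpos hec)))
    (hρs (f e) (f b) ▸ mul_le_mul_mul_of_le_mul
      (le_mul_of_quasisymmetric hqs (hpos hac) (hpos hae))
      (le_mul_of_quasisymmetric hqs (hpos heb.symm) (hpos hbc))) ?_
  simpa only [mul_assoc] using himp _ _ _ _ (by simpa only [mul_assoc] using hratio)

theorem quasisymmetric_preserves_ptolemaic
    {X Y : Type*} (d : X → X → ℝ≥0) (ρ : Y → Y → ℝ≥0)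
    (hd0 : ∀ x y, d x y = 0 ↔ x = y) (hds : ∀ x y, d x y = d y x)
    (hρ0 : ∀ x y, ρ x y = 0 ↔ x = y) (hρs : ∀ x y, ρ x y = ρ y x)
    (hX : ∀ x y z t : X, d x z * d t y ≤ d x y * d t z + d x t * d y z)
    (f : X → Y) (hf : Function.Bijective f)
    (η : ℝ≥0 → ℝ≥0) (hη : IsHomeomorph η)
    (hqs : ∀ (a b x : X) (t : ℝ≥0), 0 < t →
      d x a ≤ t * d x b → ρ (f x) (f a) ≤ η t * ρ (f x) (f b))
    (himp : ∀ t₁ t₂ t₃ t₄ : ℝ≥0,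
      t₁ * t₂ * t₃ * t₄ ≤ t₁ * t₂ + t₃ * t₄ →
      η t₁ * η t₂ * η t₃ * η t₄ ≤ η t₁ * η t₂ + η t₃ * η t₄) :
    ∀ x y z t : Y, ρ x z * ρ t y ≤ ρ x y * ρ t z + ρ x t * ρ y z :=
  quasisymmetric_preserves_ptolemaic_general d ρ hd0 hds hρ0 hρs hX f hf η hqs himp
end

section
/- Let X be a Ptolemaic semimetric space, Y a semimetric space, and f : X → Y a bijective η-quasisymmetric mapping with η(t) = t^α for some 0 < α ≤ 1. Then Y is a Ptolemaic semimetric space. -/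
/-!
Applying quasisymmetry with `t = d(x,a)/d(x,b)` and with its reciprocal gives the exact identity
`ρ(f x, f a) / ρ(f x, f b) = (d(x,a) / d(x,b))^α`, so `ρ(f x, f a) / d(x,a)^α` does not depend on
`a`; by symmetry it does not depend on `x` either. Hence `ρ(f x, f y) = c · d(x,y)^α`: `f` is a
similarity onto `Y` from the snowflake `d^α`, which is Ptolemaic because `s ↦ s^α` is monotone and
subadditive for `0 < α ≤ 1`.
-/

open NNReal Function

def IsPtolemaic {X : Type*} (d : X → X → ℝ≥0) : Prop :=
  ∀ x y z t, d x z * d t y ≤ d x y * d t z + d x t * d y z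

namespace IsPtolemaic

variable {X Y : Type*} {d : X → X → ℝ≥0}

theorem rpow (h : IsPtolemaic d) {α : ℝ} (hα0 : 0 ≤ α) (hα1 : α ≤ 1) :
    IsPtolemaic fun x y => d x y ^ α := by
  intro x y z t
  simp only [← NNReal.mul_rpow]
  calc (d x z * d t y) ^ α ≤ (d x y * d t z + d x t * d y z) ^ α :=
        NNReal.rpow_le_rpow (h x y z t) hα0
    _ ≤ (d x y * d t z) ^ α + (d x t * d y z) ^ α :=
        NNReal.rpow_add_le_add_rpow _ _ hα0 hα1

theorem const_mul (h : IsPtolemaic d) (c : ℝ≥0) : IsPtolemaic fun x y => c * d x y := by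
  intro x y z t
  calc c * d x z * (c * d t y) = c * c * (d x z * d t y) := by ring
    _ ≤ c * c * (d x y * d t z + d x t * d y z) := mul_le_mul_right (h x y z t) _
    _ = c * d x y * (c * d t z) + c * d x t * (c * d y z) := by ring

theorem of_comp {ρ : Y → Y → ℝ≥0} {f : X → Y} (hf : Surjective f)
    (h : IsPtolemaic fun x y => ρ (f x) (f y)) : IsPtolemaic ρ := by
  intro x y z t
  obtain ⟨a, rfl⟩ := hf x
  obtain ⟨b, rfl⟩ := hf y
  obtain ⟨c, rfl⟩ := hf z
  obtain ⟨e, rfl⟩ := hf t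
  exact h a b c e

end IsPtolemaic

theorem exists_forall_ne_eq_of_symm {X K : Type*} [Nonempty K] {r : X → X → K}
    (hsymm : ∀ x y, r x y = r y x) (hr : ∀ x a b, x ≠ a → x ≠ b → r x a = r x b) :
    ∃ c, ∀ x y, x ≠ y → r x y = c := by
  by_cases hX : ∃ x₀ y₀ : X, x₀ ≠ y₀
  · obtain ⟨x₀, y₀, h₀⟩ := hX
    refine ⟨r x₀ y₀, fun x y hxy => ?_⟩
    by_cases hx : x = x₀
    · subst hx
      exact hr x y y₀ hxy h₀
    · calc r x y = r x x₀ := hr x y x₀ hxy hx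
        _ = r x₀ x := hsymm x x₀
        _ = r x₀ y₀ := hr x₀ x y₀ (Ne.symm hx) h₀
  · push Not at hX
    exact ⟨Classical.arbitrary K, fun x y hxy => absurd (hX x y) hxy⟩

section PowerQuasisymmetric

variable {X Y : Type*} {d : X → X → ℝ≥0} {ρ : Y → Y → ℝ≥0} {f : X → Y} {α : ℝ}

theorem mul_rpow_le_of_quasisymmetric
    (hqs : ∀ (a b x : X) (t : ℝ≥0), 0 < t →
      d x a ≤ t * d x b → ρ (f x) (f a) ≤ t ^ α * ρ (f x) (f b))
    {x a b : X} (ha : d x a ≠ 0) (hb : d x b ≠ 0) :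
    ρ (f x) (f a) * d x b ^ α ≤ ρ (f x) (f b) * d x a ^ α := by
  have hbα : d x b ^ α ≠ 0 := by simp [NNReal.rpow_eq_zero_iff, hb]
  have hqs_ratio := hqs a b x (d x a / d x b) (pos_iff_ne_zero.mpr (div_ne_zero ha hb))
    (div_mul_cancel₀ _ hb).ge
  calc ρ (f x) (f a) * d x b ^ α
      ≤ (d x a / d x b) ^ α * ρ (f x) (f b) * d x b ^ α := mul_le_mul_left hqs_ratio _
    _ = ρ (f x) (f b) * d x a ^ α := by
        rw [NNReal.div_rpow, mul_right_comm, div_mul_cancel₀ _ hbα, mul_comm]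

theorem exists_eq_const_mul_rpow_of_quasisymmetric
    (hd0 : ∀ x y, d x y = 0 ↔ x = y) (hds : ∀ x y, d x y = d y x)
    (hρ0 : ∀ x y, ρ x y = 0 ↔ x = y) (hρs : ∀ x y, ρ x y = ρ y x) (hα0 : 0 < α)
    (hqs : ∀ (a b x : X) (t : ℝ≥0), 0 < t →
      d x a ≤ t * d x b → ρ (f x) (f a) ≤ t ^ α * ρ (f x) (f b)) :
    ∃ c : ℝ≥0, ∀ x y, ρ (f x) (f y) = c * d x y ^ α := by
  have hdα : ∀ {x y}, x ≠ y → d x y ^ α ≠ 0 := fun hxy => by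
    simp [NNReal.rpow_eq_zero_iff, hd0, hxy]
  have hratio : ∀ x a b, x ≠ a → x ≠ b →
      ρ (f x) (f a) / d x a ^ α = ρ (f x) (f b) / d x b ^ α := by
    intro x a b ha hb
    have ha' : d x a ≠ 0 := mt (hd0 x a).1 ha
    have hb' : d x b ≠ 0 := mt (hd0 x b).1 hb
    rw [div_eq_div_iff (hdα ha) (hdα hb)]
    exact le_antisymm (mul_rpow_le_of_quasisymmetric hqs ha' hb')
      (mul_rpow_le_of_quasisymmetric hqs hb' ha')
  obtain ⟨c, hc⟩ := exists_forall_ne_eq_of_symm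
    (r := fun x y => ρ (f x) (f y) / d x y ^ α) (by simp [hρs, hds]) hratio
  refine ⟨c, fun x y => ?_⟩
  by_cases hxy : x = y
  · subst hxy
    simp [(hρ0 _ _).2 rfl, (hd0 _ _).2 rfl, NNReal.zero_rpow hα0.ne']
  · rw [← hc x y hxy, div_mul_cancel₀ _ (hdα hxy)]

end PowerQuasisymmetric

theorem quasisymmetric_power_preserves_ptolemaic
    {X Y : Type*} (d : X → X → ℝ≥0) (ρ : Y → Y → ℝ≥0)
    (hd0 : ∀ x y, d x y = 0 ↔ x = y) (hds : ∀ x y, d x y = d y x)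
    (hρ0 : ∀ x y, ρ x y = 0 ↔ x = y) (hρs : ∀ x y, ρ x y = ρ y x)
    (hX : ∀ x y z t : X, d x z * d t y ≤ d x y * d t z + d x t * d y z)
    (f : X → Y) (hf : Function.Bijective f)
    (α : ℝ) (hα0 : 0 < α) (hα1 : α ≤ 1)
    (hqs : ∀ (a b x : X) (t : ℝ≥0), 0 < t →
      d x a ≤ t * d x b → ρ (f x) (f a) ≤ t ^ α * ρ (f x) (f b)) :
    ∀ x y z t : Y, ρ x z * ρ t y ≤ ρ x y * ρ t z + ρ x t * ρ y z := by
  obtain ⟨c, hc⟩ := exists_eq_const_mul_rpow_of_quasisymmetric hd0 hds hρ0 hρs hα0 hqs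
  have hsnowflake : IsPtolemaic fun x y => c * d x y ^ α :=
    (IsPtolemaic.rpow (d := d) hX hα0.le hα1).const_mul c
  refine IsPtolemaic.of_comp hf.surjective ?_
  simpa only [hc] using hsnowflake
end

section
/- Let (X,d) be a semimetric space, (Y,ρ) a metric space, and Φ : ℝ≥0 × ℝ≥0 → ℝ≥0 symmetric, monotone increasing in both arguments, Φ(0,0)=0, a ≤ Φ(0,a) for all a > 0, and kΦ(u,v) = Φ(ku,kv) for all k > 0. Suppose d(x,z)+d(t,y) ≤ Φ(d(x,y)+d(t,z), d(x,t)+d(y,z)) for all x,y,z,t ∈ X. Let f : X → Y be a bijective η-quasisymmetric mapping. If for all t₁,...,t₅ > 0, the inequality 1 + (1/t₁)(1/t₅) ≤ Φ(1/t₁ + 1/t₂, 1/t₃ + 1/t₄) implies 1 + η(1/t₁)η(1/t₅) ≤ Φ(1/η(t₁) + 1/η(t₂), 1/η(t₃) + 1/η(t₄)), then ρ(x,z)+ρ(t,y) ≤ Φ(ρ(x,y)+ρ(t,z), ρ(x,t)+ρ(y,z)) for all x,y,z,t ∈ Y. -/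
open NNReal

/-!
When two of the four points of `Y` coincide, the inequality follows from a triangle inequality,
since `a ≤ Φ 0 a` and `Φ` is symmetric and monotone. Otherwise pull the points back to
`p, q, r, s` and put `t₁ = d(p,r)/d(p,q)`, `t₂ = d(p,r)/d(s,r)`, `t₃ = d(p,r)/d(p,s)`,
`t₄ = d(p,r)/d(q,r)` and `t₅ = d(p,q)/d(s,q)`. By homogeneity of `Φ`, the hypothesis of `himp`
is the inequality in `X` divided by `d(p,r)`. Quasisymmetry gives `ρ(fp,fr) ≤ η(tᵢ) · ρ(…)` for
the four pairs on the right, and, composed twice, `ρ(fs,fq) ≤ η(1/t₁) η(1/t₅) ρ(fp,fr)`; so the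
conclusion of `himp` is, by monotonicity of `Φ`, the inequality in `Y` divided by `ρ(fp,fr)`.
-/

def IsQuasisymmetric {X Y : Type*} [PseudoMetricSpace Y] (d : X → X → ℝ≥0)
    (η : ℝ≥0 → ℝ≥0) (f : X → Y) : Prop :=
  ∀ (a b x : X) (t : ℝ≥0), 0 < t → d x a ≤ t * d x b →
    nndist (f x) (f a) ≤ η t * nndist (f x) (f b)

namespace IsQuasisymmetric

variable {X Y : Type*} [PseudoMetricSpace Y] {d : X → X → ℝ≥0} {η : ℝ≥0 → ℝ≥0} {f : X → Y}

theorem nndist_le (hf : IsQuasisymmetric d η f) {a b x : X} (ha : 0 < d x a) (hb : 0 < d x b) :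
    nndist (f x) (f a) ≤ η (d x a / d x b) * nndist (f x) (f b) :=
  hf a b x _ (div_pos ha hb) (div_mul_cancel₀ _ hb.ne').ge

theorem nndist_le_swap (hf : IsQuasisymmetric d η f) (hds : ∀ x y, d x y = d y x)
    {a b x : X} (ha : 0 < d a x) (hb : 0 < d b x) :
    nndist (f a) (f x) ≤ η (d a x / d b x) * nndist (f b) (f x) := by
  rw [hds a, hds b, nndist_comm (f a), nndist_comm (f b)] at *
  exact hf.nndist_le ha hb

end IsQuasisymmetric

section Homogeneous

variable {Φ : ℝ≥0 → ℝ≥0 → ℝ≥0}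

theorem map_div_of_homogeneous (hΦhom : ∀ k u v : ℝ≥0, 0 < k → k * Φ u v = Φ (k * u) (k * v))
    {k : ℝ≥0} (hk : 0 < k) (u v : ℝ≥0) : Φ (u / k) (v / k) = Φ u v / k := by
  simp only [div_eq_inv_mul, hΦhom _ _ _ (inv_pos.2 hk)]

theorem add_le_iff_one_add_div_le_of_homogeneous
    (hΦhom : ∀ k u v : ℝ≥0, 0 < k → k * Φ u v = Φ (k * u) (k * v))
    {k : ℝ≥0} (hk : 0 < k) (b u v : ℝ≥0) :
    k + b ≤ Φ u v ↔ 1 + b / k ≤ Φ (u / k) (v / k) := by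
  rw [map_div_of_homogeneous hΦhom hk, one_add_div hk.ne', div_le_div_iff_of_pos_right hk]

end Homogeneous

theorem NNReal.one_div_le_div_of_le_mul {a b c : ℝ≥0} (ha : 0 < a) (h : a ≤ c * b) :
    1 / c ≤ b / a := by
  have hc : 0 < c := pos_of_ne_zero fun hc => by simp [hc] at h; exact ha.ne' h
  rw [div_le_div_iff₀ hc ha, one_mul, mul_comm]
  exact h

section Bounds

variable {Φ : ℝ≥0 → ℝ≥0 → ℝ≥0}

theorem le_apply_of_le_left (hΦsymm : ∀ u v, Φ u v = Φ v u)
    (hΦmono : ∀ u₁ u₂ v₁ v₂, u₁ ≤ u₂ → v₁ ≤ v₂ → Φ u₁ v₁ ≤ Φ u₂ v₂)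
    (ha : ∀ a : ℝ≥0, 0 < a → a ≤ Φ 0 a) {a u : ℝ≥0} (hau : a ≤ u) (v : ℝ≥0) : a ≤ Φ u v := by
  rcases eq_zero_or_pos a with rfl | ha0
  · exact zero_le
  calc a ≤ Φ 0 a := ha a ha0
    _ ≤ Φ v u := hΦmono _ _ _ _ zero_le hau
    _ = Φ u v := hΦsymm v u

theorem le_apply_of_le_right (hΦsymm : ∀ u v, Φ u v = Φ v u)
    (hΦmono : ∀ u₁ u₂ v₁ v₂, u₁ ≤ u₂ → v₁ ≤ v₂ → Φ u₁ v₁ ≤ Φ u₂ v₂)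
    (ha : ∀ a : ℝ≥0, 0 < a → a ≤ Φ 0 a) {a v : ℝ≥0} (hav : a ≤ v) (u : ℝ≥0) : a ≤ Φ u v :=
  hΦsymm v u ▸ le_apply_of_le_left hΦsymm hΦmono ha hav u

theorem quadruple_le_of_degenerate {Y : Type*} [PseudoMetricSpace Y]
    (hΦsymm : ∀ u v, Φ u v = Φ v u)
    (hΦmono : ∀ u₁ u₂ v₁ v₂, u₁ ≤ u₂ → v₁ ≤ v₂ → Φ u₁ v₁ ≤ Φ u₂ v₂)
    (ha : ∀ a : ℝ≥0, 0 < a → a ≤ Φ 0 a) {x y z t : Y}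
    (h : x = z ∨ t = y ∨ x = y ∨ t = z ∨ x = t ∨ y = z) :
    nndist x z + nndist t y ≤ Φ (nndist x y + nndist t z) (nndist x t + nndist y z) := by
  have hl := @le_apply_of_le_left _ hΦsymm hΦmono ha
  have hr := @le_apply_of_le_right _ hΦsymm hΦmono ha
  rcases h with rfl | rfl | rfl | rfl | rfl | rfl
  · simpa [add_comm] using hl (nndist_triangle t x y) _
  · simpa using hl (nndist_triangle x t z) _
  · exact hr (by rw [nndist_comm t, add_comm]) _
  · exact hr (by rw [nndist_comm t]) _
  · exact hl (by rw [add_comm]) _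
  · exact hl le_rfl _

end Bounds

theorem quadruple_le_of_pos {X Y : Type*} [PseudoMetricSpace Y] {d : X → X → ℝ≥0}
    (hds : ∀ x y, d x y = d y x) {Φ : ℝ≥0 → ℝ≥0 → ℝ≥0}
    (hΦmono : ∀ u₁ u₂ v₁ v₂, u₁ ≤ u₂ → v₁ ≤ v₂ → Φ u₁ v₁ ≤ Φ u₂ v₂)
    (hΦhom : ∀ k u v : ℝ≥0, 0 < k → k * Φ u v = Φ (k * u) (k * v))
    {f : X → Y} {η : ℝ≥0 → ℝ≥0} (hqs : IsQuasisymmetric d η f)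
    (himp : ∀ t₁ t₂ t₃ t₄ t₅ : ℝ≥0, 0 < t₁ → 0 < t₂ → 0 < t₃ → 0 < t₄ → 0 < t₅ →
      1 + (1 / t₁) * (1 / t₅) ≤ Φ (1 / t₁ + 1 / t₂) (1 / t₃ + 1 / t₄) →
      1 + η (1 / t₁) * η (1 / t₅) ≤
        Φ (1 / η t₁ + 1 / η t₂) (1 / η t₃ + 1 / η t₄))
    {p q r s : X} (hpqrs : d p r + d s q ≤ Φ (d p q + d s r) (d p s + d q r))
    (hpr : 0 < d p r) (hsq : 0 < d s q) (hpq : 0 < d p q) (hsr : 0 < d s r)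
    (hps : 0 < d p s) (hqr : 0 < d q r) (hfpr : 0 < nndist (f p) (f r)) :
    nndist (f p) (f r) + nndist (f s) (f q) ≤
      Φ (nndist (f p) (f q) + nndist (f s) (f r)) (nndist (f p) (f s) + nndist (f q) (f r)) := by
  have hsource : 1 + 1 / (d p r / d p q) * (1 / (d p q / d s q)) ≤
      Φ (1 / (d p r / d p q) + 1 / (d p r / d s r))
        (1 / (d p r / d p s) + 1 / (d p r / d q r)) := by
    rw [add_le_iff_one_add_div_le_of_homogeneous hΦhom hpr] at hpqrs
    simpa only [one_div_div, div_mul_div_cancel₀' hpq.ne', add_div] using hpqrs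
  have htarget := himp _ _ _ _ _ (div_pos hpr hpq) (div_pos hpr hsr) (div_pos hpr hps)
    (div_pos hpr hqr) (div_pos hpq hsq) hsource
  simp only [one_div_div] at htarget
  rw [add_le_iff_one_add_div_le_of_homogeneous hΦhom hfpr, add_div, add_div]
  have hsq_le : nndist (f s) (f q) ≤ η (d p q / d p r) * η (d s q / d p q) * nndist (f p) (f r) :=
    calc nndist (f s) (f q) ≤ η (d s q / d p q) * nndist (f p) (f q) :=
          hqs.nndist_le_swap hds hsq hpq
      _ ≤ η (d s q / d p q) * (η (d p q / d p r) * nndist (f p) (f r)) :=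
          mul_le_mul_right (hqs.nndist_le hpq hpr) _
      _ = η (d p q / d p r) * η (d s q / d p q) * nndist (f p) (f r) := by ring
  calc 1 + nndist (f s) (f q) / nndist (f p) (f r)
      ≤ 1 + η (d p q / d p r) * η (d s q / d p q) := by
        gcongr
        exact (div_le_iff₀ hfpr).2 hsq_le
    _ ≤ Φ (1 / η (d p r / d p q) + 1 / η (d p r / d s r))
          (1 / η (d p r / d p s) + 1 / η (d p r / d q r)) := htarget
    _ ≤ _ := hΦmono _ _ _ _
        (add_le_add (one_div_le_div_of_le_mul hfpr (hqs.nndist_le hpr hpq))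
          (one_div_le_div_of_le_mul hfpr (hqs.nndist_le_swap hds hpr hsr)))
        (add_le_add (one_div_le_div_of_le_mul hfpr (hqs.nndist_le hpr hps))
          (one_div_le_div_of_le_mul hfpr (hqs.nndist_le_swap hds hpr hqr)))

theorem quasisymmetric_preserves_additive_quadruple_general
    {X Y : Type*} (d : X → X → ℝ≥0)
    (hd0 : ∀ x y, d x y = 0 ↔ x = y) (hds : ∀ x y, d x y = d y x)
    [MetricSpace Y]
    (Φ : ℝ≥0 → ℝ≥0 → ℝ≥0)
    (hΦsymm : ∀ u v, Φ u v = Φ v u)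
    (hΦmono : ∀ u₁ u₂ v₁ v₂, u₁ ≤ u₂ → v₁ ≤ v₂ → Φ u₁ v₁ ≤ Φ u₂ v₂)
    (ha : ∀ a : ℝ≥0, 0 < a → a ≤ Φ 0 a)
    (hΦhom : ∀ k u v : ℝ≥0, 0 < k → k * Φ u v = Φ (k * u) (k * v))
    (hX : ∀ x y z t : X, d x z + d t y ≤ Φ (d x y + d t z) (d x t + d y z))
    (f : X → Y) (hf : Function.Bijective f)
    (η : ℝ≥0 → ℝ≥0)
    (hqs : ∀ (a b x : X) (t : ℝ≥0), 0 < t →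
      d x a ≤ t * d x b → nndist (f x) (f a) ≤ η t * nndist (f x) (f b))
    (himp : ∀ t₁ t₂ t₃ t₄ t₅ : ℝ≥0, 0 < t₁ → 0 < t₂ → 0 < t₃ → 0 < t₄ → 0 < t₅ →
      1 + (1 / t₁) * (1 / t₅) ≤ Φ (1 / t₁ + 1 / t₂) (1 / t₃ + 1 / t₄) →
      1 + η (1 / t₁) * η (1 / t₅) ≤
        Φ (1 / η t₁ + 1 / η t₂) (1 / η t₃ + 1 / η t₄)) :
    ∀ x y z t : Y,
      nndist x z + nndist t y ≤
        Φ (nndist x y + nndist t z) (nndist x t + nndist y z) := by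
  intro x y z t
  by_cases hdeg : x = z ∨ t = y ∨ x = y ∨ t = z ∨ x = t ∨ y = z
  · exact quadruple_le_of_degenerate hΦsymm hΦmono ha hdeg
  push Not at hdeg
  obtain ⟨hxz, hty, hxy, htz, hxt, hyz⟩ := hdeg
  obtain ⟨p, rfl⟩ := hf.2 x
  obtain ⟨q, rfl⟩ := hf.2 y
  obtain ⟨r, rfl⟩ := hf.2 z
  obtain ⟨s, rfl⟩ := hf.2 t
  have hd : ∀ {a b : X}, f a ≠ f b → 0 < d a b := fun h =>
    pos_of_ne_zero fun h0 => h (congrArg f ((hd0 _ _).1 h0))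
  exact quadruple_le_of_pos hds hΦmono hΦhom hqs himp (hX p q r s) (hd hxz) (hd hty) (hd hxy)
    (hd htz) (hd hxt) (hd hyz) (pos_of_ne_zero (nndist_eq_zero.not.2 hxz))

theorem quasisymmetric_preserves_additive_quadruple
    {X Y : Type*} (d : X → X → ℝ≥0)
    (hd0 : ∀ x y, d x y = 0 ↔ x = y) (hds : ∀ x y, d x y = d y x)
    [MetricSpace Y]
    (Φ : ℝ≥0 → ℝ≥0 → ℝ≥0)
    (hΦsymm : ∀ u v, Φ u v = Φ v u)
    (hΦmono : ∀ u₁ u₂ v₁ v₂, u₁ ≤ u₂ → v₁ ≤ v₂ → Φ u₁ v₁ ≤ Φ u₂ v₂)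
    (hΦ00 : Φ 0 0 = 0)
    (ha : ∀ a : ℝ≥0, 0 < a → a ≤ Φ 0 a)
    (hΦhom : ∀ k u v : ℝ≥0, 0 < k → k * Φ u v = Φ (k * u) (k * v))
    (hX : ∀ x y z t : X, d x z + d t y ≤ Φ (d x y + d t z) (d x t + d y z))
    (f : X → Y) (hf : Function.Bijective f)
    (η : ℝ≥0 → ℝ≥0) (hη : IsHomeomorph η)
    (hqs : ∀ (a b x : X) (t : ℝ≥0), 0 < t →
      d x a ≤ t * d x b → nndist (f x) (f a) ≤ η t * nndist (f x) (f b))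
    (himp : ∀ t₁ t₂ t₃ t₄ t₅ : ℝ≥0, 0 < t₁ → 0 < t₂ → 0 < t₃ → 0 < t₄ → 0 < t₅ →
      1 + (1 / t₁) * (1 / t₅) ≤ Φ (1 / t₁ + 1 / t₂) (1 / t₃ + 1 / t₄) →
      1 + η (1 / t₁) * η (1 / t₅) ≤
        Φ (1 / η t₁ + 1 / η t₂) (1 / η t₃ + 1 / η t₄)) :
    ∀ x y z t : Y,
      nndist x z + nndist t y ≤
        Φ (nndist x y + nndist t z) (nndist x t + nndist y z) :=
  quasisymmetric_preserves_additive_quadruple_general d hd0 hds Φ hΦsymm hΦmono ha hΦhom hX f hf η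
    hqs himp
end

section
/- Let (X,d) be an additive metric space, (Y,ρ) a metric space, and f : X → Y a bijective η-quasisymmetric mapping. If for all t₁,...,t₅ > 0, 1 + (1/t₁)(1/t₅) ≤ max{1/t₁ + 1/t₂, 1/t₃ + 1/t₄} implies 1 + η(1/t₁)η(1/t₅) ≤ max{1/η(t₁) + 1/η(t₂), 1/η(t₃) + 1/η(t₄)}, then (Y,ρ) is an additive metric space. -/
/-!
Let `x, y, z, t` be pairwise distinct and write `A, …, F` for the distances `xy, xz, xt, ty, tz, yz`
in `X`. Dividing the four-point inequality `B + D ≤ max (A + E) (C + F)` by `B` gives exactly the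
premise of the hypothesis on `η` for the ratios `t₁ = B/A, t₂ = B/E, t₃ = B/C, t₄ = B/F, t₅ = A/D`.
Quasisymmetry bounds each image distance by `η` of the corresponding ratio times another image
distance, and the conclusion of the hypothesis on `η` chains these bounds into the four-point
inequality for the images.
-/

open NNReal

def FourPointIneq {α : Type*} [PseudoMetricSpace α] (x y z t : α) : Prop :=
  dist x z + dist t y ≤ max (dist x y + dist t z) (dist x t + dist y z)

def IsQuasisymmetricWith {X Y : Type*} [PseudoMetricSpace X] [PseudoMetricSpace Y]
    (η : ℝ≥0 → ℝ≥0) (f : X → Y) : Prop :=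
  ∀ (a b x : X) (t : ℝ≥0), 0 < t →
    nndist x a ≤ t * nndist x b → nndist (f x) (f a) ≤ η t * nndist (f x) (f b)

section FourPointIneq

variable {α : Type*} [PseudoMetricSpace α] {x y z t : α}

theorem fourPointIneq_iff_nndist :
    FourPointIneq x y z t ↔
      nndist x z + nndist t y ≤ max (nndist x y + nndist t z) (nndist x t + nndist y z) := by
  simp only [FourPointIneq, dist_nndist]
  norm_cast

theorem fourPointIneq_of_eq (h : x = z ∨ t = y ∨ x = y ∨ t = z ∨ x = t ∨ y = z) :
    FourPointIneq x y z t := by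
  unfold FourPointIneq
  rcases h with rfl | rfl | rfl | rfl | rfl | rfl
  · have := dist_triangle t x y
    simp only [dist_self, zero_add]
    exact le_max_of_le_left (by linarith)
  · simpa only [dist_self, add_zero] using le_max_of_le_left (dist_triangle x t z)
  · rw [dist_comm x t]
    exact le_max_of_le_right (by linarith)
  · rw [dist_comm t y]
    exact le_max_of_le_right le_rfl
  · exact le_max_of_le_left (by linarith)
  · rw [dist_comm t y]
    exact le_max_of_le_left le_rfl

end FourPointIneq

theorem IsQuasisymmetricWith.nndist_le {X Y : Type*} [PseudoMetricSpace X] [PseudoMetricSpace Y]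
    {η : ℝ≥0 → ℝ≥0} {f : X → Y} (hf : IsQuasisymmetricWith η f) {a b x : X}
    (ha : nndist x a ≠ 0) (hb : nndist x b ≠ 0) :
    nndist (f x) (f a) ≤ η (nndist x a / nndist x b) * nndist (f x) (f b) :=
  hf a b x _ (pos_iff_ne_zero.mpr (div_ne_zero ha hb)) (div_mul_cancel₀ _ hb).ge

namespace NNReal

theorem one_add_div_mul_div_le_max {A B C D E F : ℝ≥0} (hA : A ≠ 0) (hB : B ≠ 0)
    (h : B + D ≤ max (A + E) (C + F)) :
    1 + A / B * (D / A) ≤ max (A / B + E / B) (C / B + F / B) := by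
  rwa [mul_comm, div_mul_div_cancel₀ hA, ← div_self hB, ← add_div, ← add_div, ← add_div,
    max_div_div_right zero_le, div_le_div_iff_of_pos_right (pos_iff_ne_zero.mpr hB)]

theorem add_le_max_of_le_mul {P Q R S T U e₁ e₂ e₃ e₄ e₅ e₆ : ℝ≥0}
    (he : 1 + e₅ * e₆ ≤ max (1 / e₁ + 1 / e₂) (1 / e₃ + 1 / e₄))
    (h₁ : P ≤ e₁ * Q) (h₂ : P ≤ e₂ * T) (h₃ : P ≤ e₃ * R) (h₄ : P ≤ e₄ * U)
    (h₅ : Q ≤ e₅ * P) (h₆ : S ≤ e₆ * Q) :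
    P + S ≤ max (Q + T) (R + U) := by
  have hdiv {e V : ℝ≥0} (h : P ≤ e * V) : P * (1 / e) ≤ V := by
    rw [mul_one_div]
    exact div_le_of_le_mul₀ zero_le zero_le (by rwa [mul_comm])
  calc P + S ≤ P * (1 + e₅ * e₆) := by
        have : S ≤ P * (e₅ * e₆) :=
          calc S ≤ e₆ * Q := h₆
            _ ≤ e₆ * (e₅ * P) := _root_.mul_le_mul_right h₅ _
            _ = P * (e₅ * e₆) := by ring
        rw [mul_add, mul_one]
        exact add_le_add_right this P
    _ ≤ P * max (1 / e₁ + 1 / e₂) (1 / e₃ + 1 / e₄) := _root_.mul_le_mul_right he P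
    _ ≤ max (Q + T) (R + U) := by
        rw [mul_max, mul_add, mul_add]
        exact max_le_max (add_le_add (hdiv h₁) (hdiv h₂)) (add_le_add (hdiv h₃) (hdiv h₄))

end NNReal

theorem IsQuasisymmetricWith.fourPointIneq_map {X Y : Type*} [PseudoMetricSpace X]
    [PseudoMetricSpace Y] {η : ℝ≥0 → ℝ≥0} {f : X → Y} (hf : IsQuasisymmetricWith η f)
    (himp : ∀ t₁ t₂ t₃ t₄ t₅ : ℝ≥0, 0 < t₁ → 0 < t₂ → 0 < t₃ → 0 < t₄ → 0 < t₅ →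
      1 + (1 / t₁) * (1 / t₅) ≤ max (1 / t₁ + 1 / t₂) (1 / t₃ + 1 / t₄) →
      1 + η (1 / t₁) * η (1 / t₅) ≤
        max (1 / η t₁ + 1 / η t₂) (1 / η t₃ + 1 / η t₄))
    {x y z t : X} (hxy : nndist x y ≠ 0) (hxz : nndist x z ≠ 0) (hxt : nndist x t ≠ 0)
    (hty : nndist t y ≠ 0) (htz : nndist t z ≠ 0) (hyz : nndist y z ≠ 0)
    (h : FourPointIneq x y z t) : FourPointIneq (f x) (f y) (f z) (f t) := by
  rw [fourPointIneq_iff_nndist] at h ⊢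
  have pos {a b : ℝ≥0} (ha : a ≠ 0) (hb : b ≠ 0) : 0 < a / b :=
    pos_iff_ne_zero.mpr (div_ne_zero ha hb)
  have hηratio :=
    himp _ _ _ _ _ (pos hxz hxy) (pos hxz htz) (pos hxz hxt) (pos hxz hyz) (pos hxy hty)
  simp only [one_div_div] at hηratio
  have q₂ : nndist (f x) (f z) ≤ η (nndist x z / nndist t z) * nndist (f t) (f z) := by
    simpa only [nndist_comm] using
      hf.nndist_le (x := z) (a := x) (b := t) (by rwa [nndist_comm]) (by rwa [nndist_comm])
  have q₄ : nndist (f x) (f z) ≤ η (nndist x z / nndist y z) * nndist (f y) (f z) := by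
    simpa only [nndist_comm] using
      hf.nndist_le (x := z) (a := x) (b := y) (by rwa [nndist_comm]) (by rwa [nndist_comm])
  have q₆ : nndist (f t) (f y) ≤ η (nndist t y / nndist x y) * nndist (f x) (f y) := by
    simpa only [nndist_comm] using
      hf.nndist_le (x := y) (a := t) (b := x) (by rwa [nndist_comm]) (by rwa [nndist_comm])
  exact NNReal.add_le_max_of_le_mul (hηratio (NNReal.one_add_div_mul_div_le_max hxy hxz h))
    (hf.nndist_le hxz hxy) q₂ (hf.nndist_le hxz hxt) q₄ (hf.nndist_le hxy hxz) q₆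

theorem quasisymmetric_preserves_additive_metric_general
    {X Y : Type*} [MetricSpace X] [MetricSpace Y]
    (hX : ∀ x y z t : X,
      dist x z + dist t y ≤ max (dist x y + dist t z) (dist x t + dist y z))
    (f : X → Y) (hf : Function.Bijective f)
    (η : ℝ≥0 → ℝ≥0)
    (hqs : ∀ (a b x : X) (t : ℝ≥0), 0 < t →
      nndist x a ≤ t * nndist x b → nndist (f x) (f a) ≤ η t * nndist (f x) (f b))
    (himp : ∀ t₁ t₂ t₃ t₄ t₅ : ℝ≥0, 0 < t₁ → 0 < t₂ → 0 < t₃ → 0 < t₄ → 0 < t₅ →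
      1 + (1 / t₁) * (1 / t₅) ≤ max (1 / t₁ + 1 / t₂) (1 / t₃ + 1 / t₄) →
      1 + η (1 / t₁) * η (1 / t₅) ≤
        max (1 / η t₁ + 1 / η t₂) (1 / η t₃ + 1 / η t₄)) :
    ∀ x y z t : Y,
      dist x z + dist t y ≤ max (dist x y + dist t z) (dist x t + dist y z) := by
  intro x y z t
  obtain ⟨x, rfl⟩ := hf.2 x
  obtain ⟨y, rfl⟩ := hf.2 y
  obtain ⟨z, rfl⟩ := hf.2 z
  obtain ⟨t, rfl⟩ := hf.2 t
  by_cases hdeg : f x = f z ∨ f t = f y ∨ f x = f y ∨ f t = f z ∨ f x = f t ∨ f y = f z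
  · exact fourPointIneq_of_eq hdeg
  push Not at hdeg
  obtain ⟨hxz, hty, hxy, htz, hxt, hyz⟩ := hdeg
  have sep {a b : X} (h : f a ≠ f b) : nndist a b ≠ 0 :=
    nndist_eq_zero.not.mpr (ne_of_apply_ne f h)
  exact IsQuasisymmetricWith.fourPointIneq_map hqs himp (sep hxy) (sep hxz) (sep hxt) (sep hty)
    (sep htz) (sep hyz) (hX x y z t)

theorem quasisymmetric_preserves_additive_metric
    {X Y : Type*} [MetricSpace X] [MetricSpace Y]
    (hX : ∀ x y z t : X,
      dist x z + dist t y ≤ max (dist x y + dist t z) (dist x t + dist y z))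
    (f : X → Y) (hf : Function.Bijective f)
    (η : ℝ≥0 → ℝ≥0) (hη : IsHomeomorph η)
    (hqs : ∀ (a b x : X) (t : ℝ≥0), 0 < t →
      nndist x a ≤ t * nndist x b → nndist (f x) (f a) ≤ η t * nndist (f x) (f b))
    (himp : ∀ t₁ t₂ t₃ t₄ t₅ : ℝ≥0, 0 < t₁ → 0 < t₂ → 0 < t₃ → 0 < t₄ → 0 < t₅ →
      1 + (1 / t₁) * (1 / t₅) ≤ max (1 / t₁ + 1 / t₂) (1 / t₃ + 1 / t₄) →
      1 + η (1 / t₁) * η (1 / t₅) ≤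
        max (1 / η t₁ + 1 / η t₂) (1 / η t₃ + 1 / η t₄)) :
    ∀ x y z t : Y,
      dist x z + dist t y ≤ max (dist x y + dist t z) (dist x t + dist y z) :=
  quasisymmetric_preserves_additive_metric_general hX f hf η hqs himp
end

section
/- Let (X,d) and (Y,ρ) be semimetric spaces and Φ : ℝ≥0 × ℝ≥0 → ℝ≥0 be symmetric, monotone increasing in both arguments, with Φ(0,0)=0, a ≤ Φ(0,a) for all a > 0, and kΦ(u,v) = Φ(ku,kv) for all k > 0. Suppose d(x,z)d(t,y) ≤ Φ(d(x,y)d(t,z), d(x,t)d(y,z)) for all x,y,z,t ∈ X. Let f : X → Y be a bijective η-quasimöbius mapping. If for all t₁,t₂ > 0, 1 ≤ Φ(t₁,t₂) implies 1 ≤ Φ(1/η(t₁⁻¹), 1/η(t₂⁻¹)), then ρ(x,z)ρ(t,y) ≤ Φ(ρ(x,y)ρ(t,z), ρ(x,t)ρ(y,z)) for all x,y,z,t ∈ Y. -/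
/-!
Pull four points of `Y` back along `f`. If two of them coincide, the inequality in `Y` is either
trivial or reduces to `a ≤ Φ 0 a`. Otherwise divide the inequality in `X` by its left-hand side,
using homogeneity of `Φ`: the arguments become reciprocals of two cross-ratios. The transfer
hypothesis replaces them by the reciprocals of their `η`-images, which the quasimöbius bound
dominates by the corresponding cross-ratios in `Y`; monotonicity and homogeneity then give the
inequality in `Y`.
-/

open NNReal

def QuadrupleIneq {X : Type*} (Φ : ℝ≥0 → ℝ≥0 → ℝ≥0) (d : X → X → ℝ≥0) : Prop :=
  ∀ x y z t : X, d x z * d t y ≤ Φ (d x y * d t z) (d x t * d y z)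

section ControlFunction

variable {Φ : ℝ≥0 → ℝ≥0 → ℝ≥0}

theorem le_apply_iff_one_le_apply_div
    (hΦhom : ∀ k u v : ℝ≥0, 0 < k → k * Φ u v = Φ (k * u) (k * v))
    {a b c : ℝ≥0} (ha : 0 < a) : a ≤ Φ b c ↔ 1 ≤ Φ (b / a) (c / a) := by
  rw [div_eq_inv_mul, div_eq_inv_mul, ← hΦhom _ _ _ (inv_pos.2 ha),
    ← mul_le_mul_iff_right₀ (inv_pos.2 ha), inv_mul_cancel₀ ha.ne']

theorem le_apply_zero_left (ha : ∀ a : ℝ≥0, 0 < a → a ≤ Φ 0 a) (a : ℝ≥0) : a ≤ Φ 0 a := by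
  rcases eq_zero_or_pos a with rfl | hpos
  · exact zero_le
  · exact ha a hpos

theorem le_apply_of_quasimobius_bounds {η : ℝ≥0 → ℝ≥0}
    (hΦmono : ∀ u₁ u₂ v₁ v₂, u₁ ≤ u₂ → v₁ ≤ v₂ → Φ u₁ v₁ ≤ Φ u₂ v₂)
    (hΦhom : ∀ k u v : ℝ≥0, 0 < k → k * Φ u v = Φ (k * u) (k * v))
    (himp : ∀ t₁ t₂ : ℝ≥0, 0 < t₁ → 0 < t₂ →
      1 ≤ Φ t₁ t₂ → 1 ≤ Φ (1 / η t₁⁻¹) (1 / η t₂⁻¹))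
    {A U V α β γ : ℝ≥0} (hA : 0 < A) (hU : 0 < U) (hV : 0 < V)
    (hα : 0 < α) (hβ : 0 < β) (hγ : 0 < γ)
    (hX : A ≤ Φ U V) (hβη : α / β ≤ η (A / U)) (hγη : α / γ ≤ η (A / V)) :
    α ≤ Φ β γ := by
  have hrecip : ∀ {b c : ℝ≥0}, 0 < b → α / b ≤ c → 1 / c ≤ b / α := fun hb h => by
    simpa only [one_div_div] using one_div_le_one_div_of_le (div_pos hα hb) h
  have hunit := himp _ _ (div_pos hU hA) (div_pos hV hA)
    ((le_apply_iff_one_le_apply_div hΦhom hA).1 hX)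
  rw [inv_div, inv_div] at hunit
  exact (le_apply_iff_one_le_apply_div hΦhom hα).2
    (hunit.trans (hΦmono _ _ _ _ (hrecip hβ hβη) (hrecip hγ hγη)))

end ControlFunction

section Semimetric

variable {X : Type*} {d : X → X → ℝ≥0}

theorem pos_of_ne (hd0 : ∀ x y, d x y = 0 ↔ x = y) {x y : X} (h : x ≠ y) : 0 < d x y :=
  pos_iff_ne_zero.2 (mt (hd0 x y).1 h)

theorem quadrupleIneq_of_pairwise_ne {Φ : ℝ≥0 → ℝ≥0 → ℝ≥0}
    (hd0 : ∀ x y, d x y = 0 ↔ x = y) (hds : ∀ x y, d x y = d y x)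
    (hΦsymm : ∀ u v, Φ u v = Φ v u) (ha : ∀ a : ℝ≥0, 0 < a → a ≤ Φ 0 a)
    (h : ∀ x y z t : X, x ≠ y → x ≠ z → x ≠ t → y ≠ z → y ≠ t → z ≠ t →
      d x z * d t y ≤ Φ (d x y * d t z) (d x t * d y z)) :
    QuadrupleIneq Φ d := by
  have hdd : ∀ x, d x x = 0 := fun x => (hd0 x x).2 rfl
  have h0 := le_apply_zero_left ha
  intro x y z t
  by_cases hxz : x = z
  · simp [hxz, hdd]
  by_cases hty : t = y
  · simp [hty, hdd]
  by_cases hxy : x = y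
  · subst hxy
    simpa [hdd, hds t x, mul_comm] using h0 (d x t * d x z)
  by_cases hzt : z = t
  · subst hzt
    simpa [hdd, hds z y] using h0 (d x z * d y z)
  by_cases hxt : x = t
  · subst hxt
    simpa [hdd, hΦsymm _ 0, mul_comm] using h0 (d x y * d x z)
  by_cases hyz : y = z
  · subst hyz
    simpa [hdd, hΦsymm _ 0] using h0 (d x y * d t y)
  exact h x y z t hxy hxz hxt hyz (Ne.symm hty) hzt

end Semimetric

theorem quasimobius_preserves_mult_quadruple_general
    {X Y : Type*} (d : X → X → ℝ≥0) (ρ : Y → Y → ℝ≥0)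
    (hd0 : ∀ x y, d x y = 0 ↔ x = y) (hds : ∀ x y, d x y = d y x)
    (hρ0 : ∀ x y, ρ x y = 0 ↔ x = y) (hρs : ∀ x y, ρ x y = ρ y x)
    (Φ : ℝ≥0 → ℝ≥0 → ℝ≥0)
    (hΦsymm : ∀ u v, Φ u v = Φ v u)
    (hΦmono : ∀ u₁ u₂ v₁ v₂, u₁ ≤ u₂ → v₁ ≤ v₂ → Φ u₁ v₁ ≤ Φ u₂ v₂)
    (ha : ∀ a : ℝ≥0, 0 < a → a ≤ Φ 0 a)
    (hΦhom : ∀ k u v : ℝ≥0, 0 < k → k * Φ u v = Φ (k * u) (k * v))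
    (hX : ∀ x y z t : X, d x z * d t y ≤ Φ (d x y * d t z) (d x t * d y z))
    (f : X → Y) (hf : Function.Bijective f)
    (η : ℝ≥0 → ℝ≥0)
    (hqm : ∀ x y z t : X,
      x ≠ y → x ≠ z → x ≠ t → y ≠ z → y ≠ t → z ≠ t →
      ρ (f x) (f y) * ρ (f t) (f z) / (ρ (f x) (f z) * ρ (f t) (f y)) ≤
        η (d x y * d t z / (d x z * d t y)))
    (himp : ∀ t₁ t₂ : ℝ≥0, 0 < t₁ → 0 < t₂ →
      1 ≤ Φ t₁ t₂ → 1 ≤ Φ (1 / η t₁⁻¹) (1 / η t₂⁻¹)) :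
    ∀ x y z t : Y, ρ x z * ρ t y ≤ Φ (ρ x y * ρ t z) (ρ x t * ρ y z) := by
  refine quadrupleIneq_of_pairwise_ne hρ0 hρs hΦsymm ha
    fun x' y' z' t' hxy hxz hxt hyz hyt hzt => ?_
  obtain ⟨x, rfl⟩ := hf.2 x'
  obtain ⟨y, rfl⟩ := hf.2 y'
  obtain ⟨z, rfl⟩ := hf.2 z'
  obtain ⟨t, rfl⟩ := hf.2 t'
  have hne : ∀ {a b : X}, f a ≠ f b → a ≠ b := ne_of_apply_ne f
  have hdpos : ∀ {a b : X}, f a ≠ f b → 0 < d a b := fun h => pos_of_ne hd0 (hne h)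
  have hρpos : ∀ {a b : Y}, a ≠ b → 0 < ρ a b := pos_of_ne hρ0
  have hqm₁ := hqm x z y t (hne hxz) (hne hxy) (hne hxt) (hne hyz.symm) (hne hzt) (hne hyt)
  have hqm₂ := hqm x z t y (hne hxz) (hne hxt) (hne hxy) (hne hzt) (hne hyz.symm)
    (hne hyt.symm)
  rw [hρs (f y) (f t), hds y t] at hqm₂
  exact le_apply_of_quasimobius_bounds hΦmono hΦhom himp
    (mul_pos (hdpos hxz) (hdpos hyt.symm)) (mul_pos (hdpos hxy) (hdpos hzt.symm))
    (mul_pos (hdpos hxt) (hdpos hyz)) (mul_pos (hρpos hxz) (hρpos hyt.symm))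
    (mul_pos (hρpos hxy) (hρpos hzt.symm)) (mul_pos (hρpos hxt) (hρpos hyz))
    (hX x y z t) hqm₁ hqm₂

theorem quasimobius_preserves_mult_quadruple
    {X Y : Type*} (d : X → X → ℝ≥0) (ρ : Y → Y → ℝ≥0)
    (hd0 : ∀ x y, d x y = 0 ↔ x = y) (hds : ∀ x y, d x y = d y x)
    (hρ0 : ∀ x y, ρ x y = 0 ↔ x = y) (hρs : ∀ x y, ρ x y = ρ y x)
    (Φ : ℝ≥0 → ℝ≥0 → ℝ≥0)
    (hΦsymm : ∀ u v, Φ u v = Φ v u)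
    (hΦmono : ∀ u₁ u₂ v₁ v₂, u₁ ≤ u₂ → v₁ ≤ v₂ → Φ u₁ v₁ ≤ Φ u₂ v₂)
    (hΦ00 : Φ 0 0 = 0)
    (ha : ∀ a : ℝ≥0, 0 < a → a ≤ Φ 0 a)
    (hΦhom : ∀ k u v : ℝ≥0, 0 < k → k * Φ u v = Φ (k * u) (k * v))
    (hX : ∀ x y z t : X, d x z * d t y ≤ Φ (d x y * d t z) (d x t * d y z))
    (f : X → Y) (hf : Function.Bijective f)
    (η : ℝ≥0 → ℝ≥0) (hη : IsHomeomorph η)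
    (hqm : ∀ x y z t : X,
      x ≠ y → x ≠ z → x ≠ t → y ≠ z → y ≠ t → z ≠ t →
      ρ (f x) (f y) * ρ (f t) (f z) / (ρ (f x) (f z) * ρ (f t) (f y)) ≤
        η (d x y * d t z / (d x z * d t y)))
    (himp : ∀ t₁ t₂ : ℝ≥0, 0 < t₁ → 0 < t₂ →
      1 ≤ Φ t₁ t₂ → 1 ≤ Φ (1 / η t₁⁻¹) (1 / η t₂⁻¹)) :
    ∀ x y z t : Y, ρ x z * ρ t y ≤ Φ (ρ x y * ρ t z) (ρ x t * ρ y z) :=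
  quasimobius_preserves_mult_quadruple_general d ρ hd0 hds hρ0 hρs Φ hΦsymm hΦmono ha hΦhom hX f hf
    η hqm himp
end

section
/- Let (X,d) be a Ptolemaic semimetric space, (Y,ρ) a semimetric space, and f : X → Y a bijective η-quasimöbius mapping. If for all t₁,t₂ > 0, 1 ≤ t₁ + t₂ implies 1 ≤ 1/η(t₁⁻¹) + 1/η(t₂⁻¹), then (Y,ρ) is Ptolemaic. -/
/-!
Bring four distinct points of `Y` back to `X` through `f`. Dividing the Ptolemy inequality in `X`
by its left-hand side gives two cross ratios `t₁, t₂` with `t₁ + t₂ ≥ 1`. The quasimöbius bound,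
applied to the two cross ratios of the image quadruple, controls the reciprocals of the
corresponding image cross ratios from below by `1 / η t₁⁻¹` and `1 / η t₂⁻¹`, whose sum is
at least `1` by the hypothesis on `η`; this is the Ptolemy inequality in `Y`.
-/

open NNReal

theorem semimetric_ptolemy_of_coincident {Y : Type*} (ρ : Y → Y → ℝ≥0)
    (hρ_self : ∀ x, ρ x x = 0) (hρs : ∀ x y, ρ x y = ρ y x) {x y z t : Y}
    (h : x = y ∨ x = z ∨ x = t ∨ y = z ∨ y = t ∨ z = t) :
    ρ x z * ρ t y ≤ ρ x y * ρ t z + ρ x t * ρ y z := by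
  rcases h with rfl | rfl | rfl | rfl | rfl | rfl
  · rw [hρ_self, zero_mul, zero_add, hρs t x, mul_comm]
  · simp [hρ_self]
  · rw [hρ_self, zero_mul, add_zero, mul_comm]
  · exact le_self_add
  · simp [hρ_self]
  · rw [hρ_self, mul_zero, zero_add, hρs z y]

theorem inv_le_div_of_div_le {C E w : ℝ≥0} (hC : C ≠ 0) (hE : E ≠ 0) (h : C / E ≤ w) :
    w⁻¹ ≤ E / C := by
  rw [← inv_div]
  exact inv_anti₀ (div_pos hC.bot_lt hE.bot_lt) h

/-- `C` stands for the product of the diagonals of a quadruple in `Y`, `A` and `B` for the products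
of its opposite sides, and `D`, `N₁`, `N₂` for the same products in `X`. -/
theorem le_add_of_cross_ratio_le {η : ℝ≥0 → ℝ≥0}
    (himp : ∀ t₁ t₂ : ℝ≥0, 0 < t₁ → 0 < t₂ → 1 ≤ t₁ + t₂ → 1 ≤ 1 / η t₁⁻¹ + 1 / η t₂⁻¹)
    {A B C D N₁ N₂ : ℝ≥0} (hA : A ≠ 0) (hB : B ≠ 0) (hC : C ≠ 0) (hD : D ≠ 0)
    (hN₁ : N₁ ≠ 0) (hN₂ : N₂ ≠ 0) (hptolemy : D ≤ N₁ + N₂)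
    (h₁ : C / A ≤ η (D / N₁)) (h₂ : C / B ≤ η (D / N₂)) :
    C ≤ A + B := by
  have hsum : 1 ≤ N₁ / D + N₂ / D := by
    rwa [← add_div, one_le_div₀ hD.bot_lt]
  have hη := himp _ _ (div_pos hN₁.bot_lt hD.bot_lt) (div_pos hN₂.bot_lt hD.bot_lt) hsum
  rw [inv_div, inv_div, one_div, one_div] at hη
  have : 1 ≤ (A + B) / C :=
    calc 1 ≤ (η (D / N₁))⁻¹ + (η (D / N₂))⁻¹ := hη
      _ ≤ A / C + B / C :=
        add_le_add (inv_le_div_of_div_le hC hA h₁) (inv_le_div_of_div_le hC hB h₂)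
      _ = (A + B) / C := (add_div A B C).symm
  rwa [one_le_div₀ hC.bot_lt] at this

theorem ptolemy_image_of_quasimobius {X Y : Type*} (d : X → X → ℝ≥0) (ρ : Y → Y → ℝ≥0)
    (hd0 : ∀ x y, d x y = 0 → x = y) (hds : ∀ x y, d x y = d y x)
    (hρ0 : ∀ x y, ρ x y = 0 → x = y) (hρs : ∀ x y, ρ x y = ρ y x)
    (hX : ∀ x y z t : X, d x z * d t y ≤ d x y * d t z + d x t * d y z)
    (f : X → Y) (η : ℝ≥0 → ℝ≥0)
    (hqm : ∀ x y z t : X,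
      x ≠ y → x ≠ z → x ≠ t → y ≠ z → y ≠ t → z ≠ t →
      ρ (f x) (f y) * ρ (f t) (f z) / (ρ (f x) (f z) * ρ (f t) (f y)) ≤
        η (d x y * d t z / (d x z * d t y)))
    (himp : ∀ t₁ t₂ : ℝ≥0, 0 < t₁ → 0 < t₂ →
      1 ≤ t₁ + t₂ → 1 ≤ 1 / η t₁⁻¹ + 1 / η t₂⁻¹)
    {a b c s : X} (hab : f a ≠ f b) (hac : f a ≠ f c) (has : f a ≠ f s)
    (hbc : f b ≠ f c) (hbs : f b ≠ f s) (hcs : f c ≠ f s) :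
    ρ (f a) (f c) * ρ (f s) (f b) ≤
      ρ (f a) (f b) * ρ (f s) (f c) + ρ (f a) (f s) * ρ (f b) (f c) := by
  have hρ_ne {u v : X} (h : f u ≠ f v) : ρ (f u) (f v) ≠ 0 := mt (hρ0 _ _) h
  have hd_ne {u v : X} (h : f u ≠ f v) : d u v ≠ 0 := fun h0 => h (congrArg f (hd0 _ _ h0))
  refine le_add_of_cross_ratio_le himp
    (mul_ne_zero (hρ_ne hab) (hρ_ne hcs.symm)) (mul_ne_zero (hρ_ne has) (hρ_ne hbc))
    (mul_ne_zero (hρ_ne hac) (hρ_ne hbs.symm)) (mul_ne_zero (hd_ne hac) (hd_ne hbs.symm))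
    (mul_ne_zero (hd_ne hab) (hd_ne hcs.symm)) (mul_ne_zero (hd_ne has) (hd_ne hbc))
    (hX a b c s) ?_ ?_
  · exact hqm a c b s (ne_of_apply_ne f hac) (ne_of_apply_ne f hab) (ne_of_apply_ne f has)
      (ne_of_apply_ne f hbc.symm) (ne_of_apply_ne f hcs) (ne_of_apply_ne f hbs)
  · have h := hqm a c s b (ne_of_apply_ne f hac) (ne_of_apply_ne f has)
      (ne_of_apply_ne f hab) (ne_of_apply_ne f hcs) (ne_of_apply_ne f hbc.symm)
      (ne_of_apply_ne f hbs.symm)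
    rwa [hρs (f b) (f s), hds b s] at h

theorem quasimobius_preserves_ptolemaic_general
    {X Y : Type*} (d : X → X → ℝ≥0) (ρ : Y → Y → ℝ≥0)
    (hd0 : ∀ x y, d x y = 0 ↔ x = y) (hds : ∀ x y, d x y = d y x)
    (hρ0 : ∀ x y, ρ x y = 0 ↔ x = y) (hρs : ∀ x y, ρ x y = ρ y x)
    (hX : ∀ x y z t : X, d x z * d t y ≤ d x y * d t z + d x t * d y z)
    (f : X → Y) (hf : Function.Bijective f)
    (η : ℝ≥0 → ℝ≥0)
    (hqm : ∀ x y z t : X,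
      x ≠ y → x ≠ z → x ≠ t → y ≠ z → y ≠ t → z ≠ t →
      ρ (f x) (f y) * ρ (f t) (f z) / (ρ (f x) (f z) * ρ (f t) (f y)) ≤
        η (d x y * d t z / (d x z * d t y)))
    (himp : ∀ t₁ t₂ : ℝ≥0, 0 < t₁ → 0 < t₂ →
      1 ≤ t₁ + t₂ → 1 ≤ 1 / η t₁⁻¹ + 1 / η t₂⁻¹) :
    ∀ x y z t : Y, ρ x z * ρ t y ≤ ρ x y * ρ t z + ρ x t * ρ y z := by
  intro x y z t
  by_cases hcoinc : x = y ∨ x = z ∨ x = t ∨ y = z ∨ y = t ∨ z = t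
  · exact semimetric_ptolemy_of_coincident ρ (fun x => (hρ0 x x).2 rfl) hρs hcoinc
  push Not at hcoinc
  obtain ⟨hxy, hxz, hxt, hyz, hyt, hzt⟩ := hcoinc
  obtain ⟨a, rfl⟩ := hf.2 x
  obtain ⟨b, rfl⟩ := hf.2 y
  obtain ⟨c, rfl⟩ := hf.2 z
  obtain ⟨s, rfl⟩ := hf.2 t
  exact ptolemy_image_of_quasimobius d ρ (fun x y => (hd0 x y).1) hds (fun x y => (hρ0 x y).1)
    hρs hX f η hqm himp hxy hxz hxt hyz hyt hzt

theorem quasimobius_preserves_ptolemaic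
    {X Y : Type*} (d : X → X → ℝ≥0) (ρ : Y → Y → ℝ≥0)
    (hd0 : ∀ x y, d x y = 0 ↔ x = y) (hds : ∀ x y, d x y = d y x)
    (hρ0 : ∀ x y, ρ x y = 0 ↔ x = y) (hρs : ∀ x y, ρ x y = ρ y x)
    (hX : ∀ x y z t : X, d x z * d t y ≤ d x y * d t z + d x t * d y z)
    (f : X → Y) (hf : Function.Bijective f)
    (η : ℝ≥0 → ℝ≥0) (hη : IsHomeomorph η)
    (hqm : ∀ x y z t : X,
      x ≠ y → x ≠ z → x ≠ t → y ≠ z → y ≠ t → z ≠ t →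
      ρ (f x) (f y) * ρ (f t) (f z) / (ρ (f x) (f z) * ρ (f t) (f y)) ≤
        η (d x y * d t z / (d x z * d t y)))
    (himp : ∀ t₁ t₂ : ℝ≥0, 0 < t₁ → 0 < t₂ →
      1 ≤ t₁ + t₂ → 1 ≤ 1 / η t₁⁻¹ + 1 / η t₂⁻¹) :
    ∀ x y z t : Y, ρ x z * ρ t y ≤ ρ x y * ρ t z + ρ x t * ρ y z :=
  quasimobius_preserves_ptolemaic_general d ρ hd0 hds hρ0 hρs hX f hf η hqm himp
end

section
/- Let X be a Ptolemaic semimetric space, Y a semimetric space, and f : X → Y a bijective η-quasimöbius mapping with η(t) = t^α, 0 < α ≤ 1. Then Y is Ptolemaic. -/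
/-!
Since the Ptolemy inequality is trivial when two of the four points coincide, and `f` is onto,
it suffices to treat four distinct points `f a, f b, f c, f s` of `Y`. Write `A, B, C` for the three
products of opposite `ρ`-distances and `A', B', C'` for those of `d`. The quasimöbius bound, applied
to the two cross-ratios `C / A` and `C / B`, gives `C (A' / C')^α ≤ A` and `C (B' / C')^α ≤ B`, and
Ptolemy in `X` gives `1 ≤ A' / C' + B' / C'`; since `t ↦ t^α` is subadditive for `α ≤ 1`,
`1 ≤ (A' / C')^α + (B' / C')^α`, whence `C ≤ A + B`.
-/

open NNReal

namespace NNReal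

theorem mul_le_of_div_le_inv {A C r : ℝ≥0} (hA : A ≠ 0) (h : C / A ≤ r⁻¹) : C * r ≤ A := by
  rcases eq_or_ne r 0 with rfl | hr
  · simp
  rw [div_le_iff₀ (pos_iff_ne_zero.2 hA)] at h
  calc C * r ≤ r⁻¹ * A * r := mul_le_mul_left h r
    _ = A := by rw [mul_comm r⁻¹, mul_assoc, inv_mul_cancel₀ hr, mul_one]

theorem one_le_rpow_add_rpow {u v : ℝ≥0} {α : ℝ} (hα0 : 0 ≤ α) (hα1 : α ≤ 1)
    (huv : 1 ≤ u + v) : 1 ≤ u ^ α + v ^ α :=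
  calc (1 : ℝ≥0) = 1 ^ α := (one_rpow α).symm
    _ ≤ (u + v) ^ α := rpow_le_rpow huv hα0
    _ ≤ u ^ α + v ^ α := rpow_add_le_add_rpow u v hα0 hα1

theorem le_add_of_div_le_rpow {A B C A' B' C' : ℝ≥0} {α : ℝ} (hα0 : 0 < α) (hα1 : α ≤ 1)
    (hA : A ≠ 0) (hB : B ≠ 0) (hC' : C' ≤ A' + B')
    (hCA : C / A ≤ (C' / A') ^ α) (hCB : C / B ≤ (C' / B') ^ α) : C ≤ A + B := by
  rcases eq_or_ne C' 0 with rfl | hC'0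
  · rw [zero_div, zero_rpow hα0.ne', nonpos_iff_eq_zero, div_eq_zero_iff] at hCA
    exact (hCA.resolve_right hA).trans_le zero_le
  have hA' : C * (A' / C') ^ α ≤ A :=
    mul_le_of_div_le_inv hA (by rwa [← inv_rpow, inv_div])
  have hB' : C * (B' / C') ^ α ≤ B :=
    mul_le_of_div_le_inv hB (by rwa [← inv_rpow, inv_div])
  have hsum : 1 ≤ A' / C' + B' / C' := by
    rwa [← add_div, one_le_div₀ (pos_iff_ne_zero.2 hC'0)]
  calc C = C * 1 := (mul_one C).symm
    _ ≤ C * ((A' / C') ^ α + (B' / C') ^ α) :=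
        mul_le_mul_right (one_le_rpow_add_rpow hα0.le hα1 hsum) C
    _ = C * (A' / C') ^ α + C * (B' / C') ^ α := mul_add C _ _
    _ ≤ A + B := add_le_add hA' hB'

end NNReal

theorem ptolemy_of_not_pairwise_distinct {Y : Type*} (ρ : Y → Y → ℝ≥0)
    (hρ0 : ∀ x, ρ x x = 0) (hρs : ∀ x y, ρ x y = ρ y x) {x y z t : Y}
    (h : x = y ∨ x = z ∨ x = t ∨ y = z ∨ y = t ∨ z = t) :
    ρ x z * ρ t y ≤ ρ x y * ρ t z + ρ x t * ρ y z := by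
  rcases h with rfl | rfl | rfl | rfl | rfl | rfl <;> simp [hρ0, hρs, mul_comm]

theorem quasimobius_power_preserves_ptolemaic_general
    {X Y : Type*} (d : X → X → ℝ≥0) (ρ : Y → Y → ℝ≥0)
    (hds : ∀ x y, d x y = d y x)
    (hρ0 : ∀ x y, ρ x y = 0 ↔ x = y) (hρs : ∀ x y, ρ x y = ρ y x)
    (hX : ∀ x y z t : X, d x z * d t y ≤ d x y * d t z + d x t * d y z)
    (f : X → Y) (hf : Function.Bijective f)
    (α : ℝ) (hα0 : 0 < α) (hα1 : α ≤ 1)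
    (hqm : ∀ x y z t : X,
      x ≠ y → x ≠ z → x ≠ t → y ≠ z → y ≠ t → z ≠ t →
      ρ (f x) (f y) * ρ (f t) (f z) / (ρ (f x) (f z) * ρ (f t) (f y)) ≤
        (d x y * d t z / (d x z * d t y)) ^ α) :
    ∀ x y z t : Y, ρ x z * ρ t y ≤ ρ x y * ρ t z + ρ x t * ρ y z := by
  intro x y z t
  by_cases hdeg : x = y ∨ x = z ∨ x = t ∨ y = z ∨ y = t ∨ z = t
  · exact ptolemy_of_not_pairwise_distinct ρ (fun x => (hρ0 x x).2 rfl) hρs hdeg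
  push Not at hdeg
  obtain ⟨hxy, hxz, hxt, hyz, hyt, hzt⟩ := hdeg
  have hρne {p q : Y} (h : p ≠ q) : ρ p q ≠ 0 := mt (hρ0 p q).1 h
  obtain ⟨a, rfl⟩ := hf.2 x
  obtain ⟨b, rfl⟩ := hf.2 y
  obtain ⟨c, rfl⟩ := hf.2 z
  obtain ⟨s, rfl⟩ := hf.2 t
  have hCB := hqm a c s b (ne_of_apply_ne f hxz) (ne_of_apply_ne f hxt) (ne_of_apply_ne f hxy)
    (ne_of_apply_ne f hzt) (ne_of_apply_ne f hyz.symm) (ne_of_apply_ne f hyt.symm)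
  rw [hρs (f b) (f s), hds b s] at hCB
  exact NNReal.le_add_of_div_le_rpow hα0 hα1
    (mul_ne_zero (hρne hxy) (hρne hzt.symm)) (mul_ne_zero (hρne hxt) (hρne hyz)) (hX a b c s)
    (hqm a c b s (ne_of_apply_ne f hxz) (ne_of_apply_ne f hxy) (ne_of_apply_ne f hxt)
      (ne_of_apply_ne f hyz.symm) (ne_of_apply_ne f hzt) (ne_of_apply_ne f hyt)) hCB

theorem quasimobius_power_preserves_ptolemaic
    {X Y : Type*} (d : X → X → ℝ≥0) (ρ : Y → Y → ℝ≥0)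
    (hd0 : ∀ x y, d x y = 0 ↔ x = y) (hds : ∀ x y, d x y = d y x)
    (hρ0 : ∀ x y, ρ x y = 0 ↔ x = y) (hρs : ∀ x y, ρ x y = ρ y x)
    (hX : ∀ x y z t : X, d x z * d t y ≤ d x y * d t z + d x t * d y z)
    (f : X → Y) (hf : Function.Bijective f)
    (α : ℝ) (hα0 : 0 < α) (hα1 : α ≤ 1)
    (hqm : ∀ x y z t : X,
      x ≠ y → x ≠ z → x ≠ t → y ≠ z → y ≠ t → z ≠ t →
      ρ (f x) (f y) * ρ (f t) (f z) / (ρ (f x) (f z) * ρ (f t) (f y)) ≤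
        (d x y * d t z / (d x z * d t y)) ^ α) :
    ∀ x y z t : Y, ρ x z * ρ t y ≤ ρ x y * ρ t z + ρ x t * ρ y z :=
  quasimobius_power_preserves_ptolemaic_general d ρ hds hρ0 hρs hX f hf α hα0 hα1 hqm
end
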